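/- Let f : ℝ^{d_x} → ℝ^{d_z} be a linear map with ‖f(x)‖₂ ≤ ‖x‖₂ for all x, and let X ∈ ℝ^{d_x×n}. Then R(f(X)) ≤ R(X'), where X' is any matrix in ℝ^{d_z×n} with the same singular values as X (assuming d_z ≥ rank(X)). Equivalently, (1/2)∑_p log(1 + (d_z/(nε²)) σ_p(f(X))²) ≤ (1/2)∑_p log(1 + (d_z/(nε²)) σ_p(X)²). -/

import Mathlib

/-! Both sides are log-determinants: `∑ₚ log (1 + c σₚ(A)²) = log det (1 + c • AᵀA)`.
Since `F` is a contraction, `(FX)ᵀ(FX) ≤ XᵀX` in the Loewner order, and the determinant is monotone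
on positive definite matrices: conjugating `A ≤ B` by `A^{-1/2}` gives `1 ≤ A^{-1/2} B A^{-1/2}`,
whose eigenvalues are all at least `1`. -/

open Matrix

noncomputable def codingRate {d : ℕ} {m : Type*} [Fintype m] (ε : ℝ)
    (Z : Matrix (Fin d) m ℝ) : ℝ :=
  (1 / 2) * Real.log ((1 + ((d : ℝ) / (Fintype.card m * ε ^ 2)) • (Z * Zᵀ)).det)

noncomputable def deltaR {d n : ℕ} (ε : ℝ) (Z₁ Z₂ : Matrix (Fin d) (Fin n) ℝ) : ℝ :=
  codingRate ε (fromCols Z₁ Z₂) - (1 / 2) * codingRate ε Z₁ - (1 / 2) * codingRate ε Z₂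

theorem Matrix.isHermitian_transpose_mul_self {m n : Type*} [Fintype m]
    (A : Matrix m n ℝ) : (Aᵀ * A).IsHermitian := by
  have h := isHermitian_conjTranspose_mul_self A
  rwa [conjTranspose_eq_transpose_of_trivial] at h

noncomputable def sval {d n : ℕ} (A : Matrix (Fin d) (Fin n) ℝ) : Fin n → ℝ :=
  fun p => Real.sqrt ((Matrix.isHermitian_transpose_mul_self A).eigenvalues
    (Tuple.sort ((Matrix.isHermitian_transpose_mul_self A).eigenvalues) p.rev))

noncomputable def colSpan {d n : ℕ} (A : Matrix (Fin d) (Fin n) ℝ) :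
    Submodule ℝ (Fin d → ℝ) :=
  Submodule.span ℝ (Set.range Aᵀ)

open scoped MatrixOrder

namespace Matrix

lemma posSemidef_transpose_mul_self {m n : Type*} [Fintype m] [Fintype n] (A : Matrix m n ℝ) :
    (Aᵀ * A).PosSemidef := by
  simpa only [conjTranspose_eq_transpose_of_trivial] using posSemidef_conjTranspose_mul_self A

lemma dotProduct_transpose_mul_self_mulVec {m n : Type*} [Fintype m] [Fintype n]
    (A : Matrix m n ℝ) (x : n → ℝ) :
    x ⬝ᵥ (Aᵀ * A) *ᵥ x = ∑ i, (A *ᵥ x) i ^ 2 := by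
  rw [← mulVec_mulVec, dotProduct_mulVec, vecMul_transpose]
  simp only [dotProduct, sq]

lemma transpose_mul_self_le_of_contraction {k m n : Type*} [Fintype k] [Fintype m] [Fintype n]
    {F : Matrix m k ℝ} (hF : ∀ x : k → ℝ, ∑ i, (F *ᵥ x) i ^ 2 ≤ ∑ i, x i ^ 2)
    (X : Matrix k n ℝ) : (F * X)ᵀ * (F * X) ≤ Xᵀ * X := by
  refine le_iff.mpr (posSemidef_iff_dotProduct_mulVec.mpr ⟨?_, fun x => ?_⟩)
  · exact (isHermitian_transpose_mul_self X).sub (isHermitian_transpose_mul_self (F * X))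
  · rw [star_trivial, sub_mulVec, dotProduct_sub, sub_nonneg,
      dotProduct_transpose_mul_self_mulVec, dotProduct_transpose_mul_self_mulVec,
      ← mulVec_mulVec]
    exact hF (X *ᵥ x)

variable {n : Type*} [Fintype n] [DecidableEq n]

lemma IsHermitian.det_cfc {A : Matrix n n ℝ} (hA : A.IsHermitian) (f : ℝ → ℝ) :
    (cfc f A).det = ∏ i, f (hA.eigenvalues i) := by
  rw [hA.cfc_eq]
  simp [IsHermitian.cfc, -Unitary.conjStarAlgAut_apply]

lemma IsHermitian.det_one_add_smul {A : Matrix n n ℝ} (hA : A.IsHermitian) (c : ℝ) :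
    (1 + c • A).det = ∏ i, (1 + c * hA.eigenvalues i) := by
  have : cfc (fun x => 1 + c * x) A = 1 + c • A := by
    rw [cfc_add .., cfc_const_one .., cfc_const_mul .., cfc_id' ..]
  rw [← this, hA.det_cfc]

lemma one_le_det_of_one_le {C : Matrix n n ℝ} (hC : 1 ≤ C) : 1 ≤ C.det := by
  have hP : (C - 1).PosSemidef := hC
  have hdet := hP.1.det_one_add_smul 1
  rw [one_smul, add_sub_cancel] at hdet
  rw [hdet]
  exact Finset.one_le_prod fun i _ => by linarith [hP.eigenvalues_nonneg i]

lemma det_le_det_of_le {A B : Matrix n n ℝ} (hA : A.PosDef) (hAB : A ≤ B) :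
    A.det ≤ B.det := by
  set S := CFC.sqrt A
  have hSS : S * S = A := CFC.sqrt_mul_sqrt_self A hA.posSemidef.nonneg
  have hS : Sᴴ = S := (CFC.sqrt_nonneg A).posSemidef.1
  have hSunit : IsUnit S.det := by
    refine isUnit_iff_ne_zero.mpr fun h => hA.det_pos.ne' ?_
    rw [← hSS, det_mul, h, zero_mul]
  have hconj : 1 ≤ S⁻¹ * B * S⁻¹ := by
    have h := star_left_conjugate_le_conjugate hAB S⁻¹
    rwa [star_eq_conjTranspose, conjTranspose_nonsing_inv, hS, ← hSS, ← mul_assoc,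
      nonsing_inv_mul S hSunit, one_mul, mul_nonsing_inv S hSunit] at h
  have h1 := one_le_det_of_one_le hconj
  rw [det_mul, det_mul] at h1
  have hinv : S⁻¹.det * S.det = 1 := det_nonsing_inv_mul_det S hSunit
  calc A.det = S.det * S.det * 1 := by rw [← hSS, det_mul, mul_one]
    _ ≤ S.det * S.det * (S⁻¹.det * B.det * S⁻¹.det) :=
        mul_le_mul_of_nonneg_left h1 (mul_self_nonneg _)
    _ = B.det := by linear_combination (S⁻¹.det * S.det + 1) * B.det * hinv

end Matrix

lemma sum_comp_sval_sq {d n : ℕ} (A : Matrix (Fin d) (Fin n) ℝ) (g : ℝ → ℝ) :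
    ∑ p, g (sval A p ^ 2) = ∑ i, g ((isHermitian_transpose_mul_self A).eigenvalues i) := by
  set hA := isHermitian_transpose_mul_self A
  refine Fintype.sum_equiv (Fin.revPerm.trans (Tuple.sort hA.eigenvalues)) _ _ fun p => ?_
  rw [sval, Real.sq_sqrt ((posSemidef_transpose_mul_self A).eigenvalues_nonneg _)]
  rfl

lemma sum_log_one_add_mul_sval_sq {d n : ℕ} {c : ℝ} (hc : 0 ≤ c)
    (A : Matrix (Fin d) (Fin n) ℝ) :
    ∑ p, Real.log (1 + c * sval A p ^ 2) = Real.log (1 + c • (Aᵀ * A)).det := by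
  have hA := posSemidef_transpose_mul_self A
  rw [sum_comp_sval_sq A fun s => Real.log (1 + c * s), hA.1.det_one_add_smul,
    Real.log_prod fun i _ => ?_]
  nlinarith [hA.eigenvalues_nonneg i]

theorem stmt3_general {dx dz n : ℕ} (ε : ℝ)
    (F : Matrix (Fin dz) (Fin dx) ℝ)
    (hF : ∀ x : Fin dx → ℝ, ∑ i, (F.mulVec x i) ^ 2 ≤ ∑ i, (x i) ^ 2)
    (X : Matrix (Fin dx) (Fin n) ℝ) :
    (1 / 2) * ∑ p : Fin n, Real.log (1 + ((dz : ℝ) / (n * ε ^ 2)) * (sval (F * X) p) ^ 2)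
      ≤ (1 / 2) * ∑ p : Fin n, Real.log (1 + ((dz : ℝ) / (n * ε ^ 2)) * (sval X p) ^ 2) := by
  set c : ℝ := (dz : ℝ) / (n * ε ^ 2)
  have hc : 0 ≤ c := by positivity
  have hpos : (1 + c • ((F * X)ᵀ * (F * X))).PosDef :=
    PosDef.one.add_posSemidef ((posSemidef_transpose_mul_self _).smul hc)
  rw [sum_log_one_add_mul_sval_sq hc, sum_log_one_add_mul_sval_sq hc]
  gcongr
  · exact hpos.det_pos
  · refine det_le_det_of_le hpos (add_le_add_right ?_ 1)
    exact smul_le_smul_of_nonneg_left (transpose_mul_self_le_of_contraction hF X) hc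

/-- If ‖F x‖₂ ≤ ‖x‖₂ for all x, then
(1/2)∑ₚ log(1 + (d_z/(nε²)) σ_p(F X)²) ≤ (1/2)∑ₚ log(1 + (d_z/(nε²)) σ_p(X)²). -/
theorem stmt3 {dx dz n : ℕ} (ε : ℝ) (hε : 0 < ε)
    (F : Matrix (Fin dz) (Fin dx) ℝ)
    (hF : ∀ x : Fin dx → ℝ, ∑ i, (F.mulVec x i) ^ 2 ≤ ∑ i, (x i) ^ 2)
    (X : Matrix (Fin dx) (Fin n) ℝ) :
    (1 / 2) * ∑ p : Fin n, Real.log (1 + ((dz : ℝ) / (n * ε ^ 2)) * (sval (F * X) p) ^ 2)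
      ≤ (1 / 2) * ∑ p : Fin n, Real.log (1 + ((dz : ℝ) / (n * ε ^ 2)) * (sval X p) ^ 2) :=
  stmt3_general ε F hF X
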